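/- Let P, Q : ℤ → ℝ with P(n) ≠ 0 for all n. Then 2·𝒫₂ applied to the pair ( ½(1/P² − Q⁺/(P²P⁺) − Q/(P⁻P²)), 1/(2P⁻P) ) equals ( Q⁺/P⁺ − Q/P⁻, Q/P − Q/P⁻ ). In other words, the first negative flow of the Ablowitz–Ladik hierarchy is the Hamiltonian system with operator 𝒫₂ and Hamiltonian 2G₁, where G₁ = Σₙ g₁(n) with g₁ = ½(Q⁺/(PP⁺) − 1/P), whose variational derivatives are δG₁/δP = ½(1/P² − Q⁺/(P²P⁺) − Q/(P⁻P²)) and δG₁/δQ = 1/(2P⁻P). -/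

import Mathlib

/-! The `Q`-component telescopes: `P·δG₁/δP = 1/(2P) − η⁺ − η` with `η = Q·δG₁/δQ`, so in the
second component of `𝒫₂` the `η`-terms cancel against `Q(η⁺ − η⁻)` and only `Q(1/(2P) − 1/(2P⁻))`
survives. The `P`-component is a direct computation. -/

/-- The shift operator: `(shift f) n = f (n+1)`, i.e. `f⁺`. -/
def shift (f : ℤ → ℝ) : ℤ → ℝ := fun n => f (n + 1)

/-- The inverse shift operator: `(shiftInv f) n = f (n-1)`, i.e. `f⁻`. -/
def shiftInv (f : ℤ → ℝ) : ℤ → ℝ := fun n => f (n - 1)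

/-- The second Hamiltonian operator of the Ablowitz–Ladik hierarchy:
`𝒫₂(ξ) = ( P((Qξ₂)⁺ − Qξ₂) , Q(Pξ₁ − (Pξ₁)⁻) + Q((Qξ₂)⁺ − (Qξ₂)⁻) )`. -/
def P2op (P Q : ℤ → ℝ) (ξ : (ℤ → ℝ) × (ℤ → ℝ)) : (ℤ → ℝ) × (ℤ → ℝ) :=
  (P * (shift (Q * ξ.2) - Q * ξ.2),
   Q * (P * ξ.1 - shiftInv (P * ξ.1)) + Q * (shift (Q * ξ.2) - shiftInv (Q * ξ.2)))

lemma shiftInv_shift (f : ℤ → ℝ) : shiftInv (shift f) = f :=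
  funext fun n => by simp [shift, shiftInv]

lemma shiftInv_sub (f g : ℤ → ℝ) : shiftInv (f - g) = shiftInv f - shiftInv g := rfl

lemma P2op_snd_eq_of_mul_fst_eq {P Q f : ℤ → ℝ} {ξ : (ℤ → ℝ) × (ℤ → ℝ)}
    (h : P * ξ.1 = f - shift (Q * ξ.2) - Q * ξ.2) :
    (P2op P Q ξ).2 = Q * (f - shiftInv f) := by
  simp only [P2op, h, shiftInv_sub, shiftInv_shift]
  ring

-- The variational derivatives `δG₁/δP` and `δG₁/δQ` of `G₁ = Σₙ ½(Q⁺/(PP⁺) − 1/P)`.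
noncomputable def varDerivG₁P (P Q : ℤ → ℝ) : ℤ → ℝ :=
  fun n => (1 / 2) * (1 / P n ^ 2 - Q (n + 1) / (P n ^ 2 * P (n + 1)) -
    Q n / (P (n - 1) * P n ^ 2))

noncomputable def varDerivG₁Q (P : ℤ → ℝ) : ℤ → ℝ :=
  fun n => 1 / (2 * P (n - 1) * P n)

variable {P : ℤ → ℝ} (Q : ℤ → ℝ)

lemma mul_varDerivG₁P (hP : ∀ n, P n ≠ 0) :
    P * varDerivG₁P P Q =
      (fun n => 1 / (2 * P n)) - shift (Q * varDerivG₁Q P) - Q * varDerivG₁Q P := by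
  funext n
  have := hP n
  simp only [varDerivG₁P, varDerivG₁Q, shift, Pi.mul_apply, Pi.sub_apply, add_sub_cancel_right]
  field_simp

lemma mul_shift_sub_mul_varDerivG₁Q (hP : ∀ n, P n ≠ 0) :
    P * (shift (Q * varDerivG₁Q P) - Q * varDerivG₁Q P) =
      fun n => (Q (n + 1) / P (n + 1) - Q n / P (n - 1)) / 2 := by
  funext n
  have := hP n
  have := hP (n + 1)
  have := hP (n - 1)
  simp only [varDerivG₁Q, shift, Pi.mul_apply, Pi.sub_apply, add_sub_cancel_right]
  field_simp

theorem first_negative_flow_hamiltonian_P2 (P Q : ℤ → ℝ) (hP : ∀ n : ℤ, P n ≠ 0) :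
    (2 : ℝ) • P2op P Q
        (fun n => (1 / 2) * (1 / P n ^ 2 - Q (n + 1) / (P n ^ 2 * P (n + 1)) -
            Q n / (P (n - 1) * P n ^ 2)),
         fun n => 1 / (2 * P (n - 1) * P n)) =
      (fun n => Q (n + 1) / P (n + 1) - Q n / P (n - 1),
       fun n => Q n / P n - Q n / P (n - 1)) := by
  change (2 : ℝ) • P2op P Q (varDerivG₁P P Q, varDerivG₁Q P) = _
  have hsnd := P2op_snd_eq_of_mul_fst_eq (ξ := (varDerivG₁P P Q, varDerivG₁Q P))
    (mul_varDerivG₁P Q hP)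
  refine Prod.ext ?_ ?_
  · simp only [Prod.smul_fst, P2op, mul_shift_sub_mul_varDerivG₁Q Q hP]
    funext n
    simp only [Pi.smul_apply, smul_eq_mul]
    ring
  · rw [Prod.smul_snd, hsnd]
    funext n
    have := hP n
    have := hP (n - 1)
    simp only [Pi.smul_apply, Pi.mul_apply, Pi.sub_apply, shiftInv, smul_eq_mul]
    field_simp
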